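/- arXiv:0812.4087 — 3 statements merged into one kernel-verified Lean document; each statement's English description precedes it below -/
import Mathlib

section
/- Let n ≥ 4 and let π be the permutation representation of S_n on ℂⁿ. Then for every τ ∈ S_n, the operator π(τ) lies in the linear span of {π(σ) : σ ∈ A_n}, i.e. the subalgebra of M_n(ℂ) generated by {π(σ) : σ ∈ A_n} contains π(τ) for all τ ∈ S_n. -/
open Matrix

/-- The permutation matrix of `σ`: entry `(i, j)` is `1` if `σ j = i` and `0` otherwise. -/
def permMat (n : ℕ) (σ : Equiv.Perm (Fin n)) : Matrix (Fin n) (Fin n) ℂ :=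
  Matrix.of fun i j => if σ j = i then 1 else 0

/-!
The span of the images of an index-two subgroup `H` under a representation is stable under left
multiplication by `H`, so once it contains the image of one `s ∉ H` it contains the image of every
`τ = (τ s⁻¹) s`. For `A_n ⊆ S_n` the transposition `(b c)` is such an `s`: with two further
points `a, d` (this is where `n ≥ 4` is needed), the permutation matrices satisfy
`2 (b c) = (a b c) + (a c b) + (b c d) + (b d c) - (a b)(c d) - (a c)(b d)`,
and every permutation on the right is even.
-/

section SpanImage

variable {R G A : Type*} [CommSemiring R] [Group G] [Semiring A] [Algebra R A]
  (f : G →* A) {H : Subgroup G}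

theorem MonoidHom.mul_mem_span_image {g : G} (hg : g ∈ H) {x : A}
    (hx : x ∈ Submodule.span R {a | ∃ h ∈ H, a = f h}) :
    f g * x ∈ Submodule.span R {a | ∃ h ∈ H, a = f h} := by
  induction hx using Submodule.span_induction with
  | mem y hy =>
    obtain ⟨h, hh, rfl⟩ := hy
    exact Submodule.subset_span ⟨g * h, H.mul_mem hg hh, (map_mul f g h).symm⟩
  | zero => simp
  | add y z _ _ hy hz => rw [mul_add]; exact add_mem hy hz
  | smul r y _ hy => rw [mul_smul_comm]; exact Submodule.smul_mem _ r hy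

theorem MonoidHom.mem_span_image_of_index_two (hH : H.index = 2) {s : G} (hs : s ∉ H)
    (hfs : f s ∈ Submodule.span R {a | ∃ h ∈ H, a = f h}) (τ : G) :
    f τ ∈ Submodule.span R {a | ∃ h ∈ H, a = f h} := by
  by_cases hτ : τ ∈ H
  · exact Submodule.subset_span ⟨τ, hτ, rfl⟩
  have hτs : τ * s⁻¹ ∈ H := by
    rw [Subgroup.mul_mem_iff_of_index_two hH, inv_mem_iff]
    exact iff_of_false hτ hs
  simpa [← map_mul] using f.mul_mem_span_image hτs hfs

end SpanImage

open Equiv Equiv.Perm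

namespace Equiv.Perm

variable {α : Type*} [DecidableEq α] [Fintype α]

theorem swap_mul_swap_mem_alternatingGroup {a b c d : α} (hab : a ≠ b) (hcd : c ≠ d) :
    swap a b * swap c d ∈ alternatingGroup α :=
  mul_mem_alternatingGroup_of_isSwap (swap_isSwap_iff.2 hab) (swap_isSwap_iff.2 hcd)

theorem swap_notMem_alternatingGroup {a b : α} (hab : a ≠ b) : swap a b ∉ alternatingGroup α := by
  rw [mem_alternatingGroup, sign_swap hab]
  decide

end Equiv.Perm

theorem permMat_eq_permMatrixHom (n : ℕ) :
    permMat n = ⇑(permMatrixHom (n := Fin n) (R := ℂ)) := by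
  ext σ i j
  simp [permMat, PEquiv.toMatrix_apply, eq_symm_apply, eq_comm]

/-- `swap a b * swap b c` is the 3-cycle `(a b c)`. -/
theorem two_smul_permMat_swap {n : ℕ} {a b c d : Fin n} (hab : a ≠ b) (hac : a ≠ c)
    (had : a ≠ d) (hbc : b ≠ c) (hbd : b ≠ d) (hcd : c ≠ d) :
    (2 : ℂ) • permMat n (swap b c) =
      permMat n (swap a b * swap b c) + permMat n ((swap a b * swap b c) ^ 2)
      + permMat n (swap b c * swap c d) + permMat n ((swap b c * swap c d) ^ 2)
      - permMat n (swap a b * swap c d) - permMat n (swap a c * swap b d) := by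
  ext i j
  simp only [permMat, Matrix.smul_apply, Matrix.add_apply, Matrix.sub_apply, of_apply,
    Perm.mul_apply, pow_two]
  have := hab.symm; have := hac.symm; have := had.symm
  have := hbc.symm; have := hbd.symm; have := hcd.symm
  by_cases j = a <;> by_cases j = b <;> by_cases j = c <;> by_cases j = d <;> subst_vars <;>
    simp_all [swap_apply_of_ne_of_ne] <;> split_ifs <;> norm_num

theorem permMat_swap_mem_span_alternating {n : ℕ} {a b c d : Fin n} (hab : a ≠ b) (hac : a ≠ c)
    (had : a ≠ d) (hbc : b ≠ c) (hbd : b ≠ d) (hcd : c ≠ d) :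
    permMat n (swap b c) ∈ Submodule.span ℂ
      {M : Matrix (Fin n) (Fin n) ℂ | ∃ σ ∈ alternatingGroup (Fin n), M = permMat n σ} := by
  set V := Submodule.span ℂ
    {M : Matrix (Fin n) (Fin n) ℂ | ∃ σ ∈ alternatingGroup (Fin n), M = permMat n σ}
  have mem : ∀ σ ∈ alternatingGroup (Fin n), permMat n σ ∈ V :=
    fun σ hσ => Submodule.subset_span ⟨σ, hσ, rfl⟩
  have habc := swap_mul_swap_mem_alternatingGroup hab hbc
  have hbcd := swap_mul_swap_mem_alternatingGroup hbc hcd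
  rw [← Submodule.smul_mem_iff V (two_ne_zero (α := ℂ)),
    two_smul_permMat_swap hab hac had hbc hbd hcd]
  refine sub_mem (sub_mem (add_mem (add_mem (add_mem ?_ ?_) ?_) ?_) ?_) ?_
  · exact mem _ habc
  · exact mem _ (pow_mem habc 2)
  · exact mem _ hbcd
  · exact mem _ (pow_mem hbcd 2)
  · exact mem _ (swap_mul_swap_mem_alternatingGroup hab hcd)
  · exact mem _ (swap_mul_swap_mem_alternatingGroup hac hbd)

/-- For `n ≥ 4` and every `τ ∈ S_n`, the operator `π(τ)` lies in the linear span of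
`{π(σ) : σ ∈ A_n}` in `M_n(ℂ)`. -/
theorem permMat_mem_span_alternating (n : ℕ) (hn : 4 ≤ n) (τ : Equiv.Perm (Fin n)) :
    permMat n τ ∈ Submodule.span ℂ
      {M : Matrix (Fin n) (Fin n) ℂ | ∃ σ ∈ alternatingGroup (Fin n), M = permMat n σ} := by
  have hne : ∀ {i j : Fin 4}, i ≠ j → Fin.castLE hn i ≠ Fin.castLE hn j :=
    (Fin.castLE_injective hn).ne
  have hbc : Fin.castLE hn 1 ≠ Fin.castLE hn 2 := hne (by decide)
  have hswap := permMat_swap_mem_span_alternating (a := Fin.castLE hn 0) (d := Fin.castLE hn 3)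
    (hne (by decide)) (hne (by decide)) (hne (by decide)) hbc (hne (by decide)) (hne (by decide))
  have : Nontrivial (Fin n) := nontrivial_of_ne _ _ hbc
  rw [permMat_eq_permMatrixHom] at hswap ⊢
  exact MonoidHom.mem_span_image_of_index_two _ alternatingGroup.index_eq_two
    (swap_notMem_alternatingGroup hbc) hswap τ
end

section
/- Let X be a locally compact Hausdorff space, π a star-representation of C₀(X) on a Hilbert space H, and x a point in the support of π. Then for every open neighborhood v of x, there exists a unit vector ξ ∈ H and a continuous function g : X → [0,1] with compact support contained in v such that π(g)ξ = ξ. -/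
open scoped ZeroAtInfty

open Set in
/-- Let `X` be a locally compact Hausdorff space, `π` a star-representation of `C₀(X)` on
a Hilbert space `H` with `Ker π = C₀(U)` for an open `U`, and `x ∈ X \ U` a point of the
support of `π`.  Then for every open neighborhood `v` of `x` there exist a unit vector
`ξ ∈ H` and a continuous `[0,1]`-valued function `g` with compact support contained in `v`
such that `π(g) ξ = ξ`. -/
theorem exists_unit_vector_fixed_by_bump
    {X : Type*} [TopologicalSpace X] [LocallyCompactSpace X] [T2Space X]
    {H : Type*} [NormedAddCommGroup H] [InnerProductSpace ℂ H] [CompleteSpace H]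
    (π : C₀(X, ℂ) →⋆ₙₐ[ℂ] (H →L[ℂ] H))
    (U : Set X) (hU : IsOpen U)
    (hKer : ∀ f : C₀(X, ℂ), π f = 0 ↔ ∀ y ∉ U, f y = 0)
    (x : X) (hx : x ∉ U)
    (v : Set X) (hv : IsOpen v) (hxv : x ∈ v) :
    ∃ (ξ : H) (g : C₀(X, ℂ)), ‖ξ‖ = 1 ∧
      (∀ y : X, ∃ t : ℝ, t ∈ Set.Icc (0 : ℝ) 1 ∧ g y = (t : ℂ)) ∧
      HasCompactSupport (⇑g) ∧ tsupport (⇑g) ⊆ v ∧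
      π g ξ = ξ := by
  -- a compact neighborhood K of x inside v
  obtain ⟨K, hK, hxK, hKv⟩ : ∃ K, IsCompact K ∧ x ∈ interior K ∧ K ⊆ v :=
    exists_compact_subset hv hxv
  -- f : bump equal to 1 at x, supported in interior K
  obtain ⟨f, hf1, hf0, hfc, hf01⟩ :=
    exists_continuous_one_zero_of_isCompact (isCompact_singleton (x := x))
      isOpen_interior.isClosed_compl
      (disjoint_compl_right_iff_subset.mpr (singleton_subset_iff.mpr hxK))
  -- an intermediate compact closed set k with K ⊆ interior k ⊆ k ⊆ v
  obtain ⟨k, hk, hkcl, hKk, hkv⟩ : ∃ k, IsCompact k ∧ IsClosed k ∧ K ⊆ interior k ∧ k ⊆ v :=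
    exists_compact_closed_between hK hv hKv
  -- g : bump equal to 1 on K, supported in interior k
  obtain ⟨g, hg1, hg0, hgc, hg01⟩ :=
    exists_continuous_one_zero_of_isCompact hK isOpen_interior.isClosed_compl
      (disjoint_compl_right_iff_subset.mpr hKk)
  -- complexifications as C₀ functions
  let F : C₀(X, ℂ) := ⟨⟨fun y => (f y : ℂ), by continuity⟩, by
    have : HasCompactSupport (fun y => (f y : ℂ)) := by
      apply hfc.comp_left (g := (Complex.ofReal ·)); simp
    exact this.is_zero_at_infty⟩
  let G : C₀(X, ℂ) := ⟨⟨fun y => (g y : ℂ), by continuity⟩, by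
    have : HasCompactSupport (fun y => (g y : ℂ)) := by
      apply hgc.comp_left (g := (Complex.ofReal ·)); simp
    exact this.is_zero_at_infty⟩
  have hGF : G * F = F := by
    ext y
    show (g y : ℂ) * f y = f y
    by_cases hy : f y = 0
    · simp [hy]
    · have hyK : y ∈ K := interior_subset <| by
        by_contra h
        exact hy (hf0 h)
      rw [hg1 hyK]
      simp
  have hF : π F ≠ 0 := by
    rw [Ne, hKer]
    push_neg
    refine ⟨x, hx, ?_⟩
    have : f x = 1 := hf1 (mem_singleton x)
    simp [F, this]
  obtain ⟨η, hη⟩ : ∃ η, π F η ≠ 0 := by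
    by_contra h
    push_neg at h
    exact hF (ContinuousLinearMap.ext fun η => h η)
  set w : H := π F η with hw
  have hwn : ‖w‖ ≠ 0 := norm_ne_zero_iff.mpr hη
  refine ⟨(‖w‖ : ℂ)⁻¹ • w, G, ?_, ?_, ?_, ?_, ?_⟩
  · rw [norm_smul]
    simp [norm_inv, hwn]
  · intro y
    exact ⟨g y, hg01 y, rfl⟩
  · exact hgc.comp_left (g := (Complex.ofReal ·)) (by simp)
  · have h1 : tsupport (⇑G) ⊆ tsupport (⇑g) := by
      apply closure_mono
      intro y hy
      simp only [Function.mem_support] at hy ⊢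
      exact fun h => hy (by simp [G, h])
    have h2 : tsupport (⇑g) ⊆ k := by
      have hsupp : Function.support (⇑g) ⊆ interior k := fun y hy => by
        by_contra h
        exact hy (hg0 h)
      exact (closure_mono (hsupp.trans interior_subset)).trans (by rw [hkcl.closure_eq])
    exact h1.trans (h2.trans hkv)
  · have : π G w = w := by
      rw [hw, ← ContinuousLinearMap.mul_apply, ← map_mul, hGF]
    rw [map_smul, this]
end

section
/- Let n ≥ 4, τ an odd permutation in S_n, and π the permutation representation of S_n on ℂⁿ. Then there exists a unitary element v in the group C*-algebra C*(A_n) (equivalently, in the finite-dimensional group algebra ℂ[A_n] with its canonical C*-structure) such that π̃(v) = π(τ), where π̃ is the integrated representation of ℂ[A_n]. -/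
open Matrix

/-- The canonical involution on the group algebra `ℂ[G]`:
`(Σ a_σ σ)* = Σ conj(a_σ) σ⁻¹`. -/
noncomputable def gaStar {G : Type*} [Group G] (v : MonoidAlgebra ℂ G) :
    MonoidAlgebra ℂ G :=
  MonoidAlgebra.ofCoeff
    (Finsupp.mapRange (starRingEnd ℂ) (by simp) (Finsupp.equivMapDomain (Equiv.inv G) v.coeff))

/-- The integrated representation `π̃ : ℂ[A_n] → M_n(ℂ)` of the permutation
representation. -/
noncomputable def tildePi (n : ℕ) (v : MonoidAlgebra ℂ (alternatingGroup (Fin n))) :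
    Matrix (Fin n) (Fin n) ℂ :=
  v.coeff.sum fun σ c => c • permMat n (σ : Equiv.Perm (Fin n))

/-! Let a finite group `G` act 2-transitively on a finite set `α`, with permutation
representation `ρ`, and let `⟨X, Z⟩ = ∑ k l, X k l * Z k l`. The map `T X = ∑ σ, ⟨ρ σ, X⟩ σ` is
the transpose of the integrated representation, and counting the permutations that move a point
(or a pair of distinct points) to another gives `∑ σ, ⟨ρ σ, X⟩ ⟨ρ σ, Z⟩ = c ⟨X, Z⟩` with
`c = |G| / (|α| - 1)`, as soon as `X` has vanishing row and column sums. Hence on such matrices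
`c⁻¹ T` is a right inverse of the integrated representation that is multiplicative and
`*`-preserving, so for a unitary `U` with `U - 1` of vanishing line sums (any permutation
matrix) `1 + c⁻¹ T (U - 1)` is a unitary of `ℂ[G]` lifting `U`. For `n ≥ 4`, `A_n` acts
2-transitively on `Fin n`. -/

open Finset MulAction

section GroupAlgebraStar

variable {G : Type*} [Group G]

lemma gaStar_coeff (v : MonoidAlgebra ℂ G) (g : G) :
    (gaStar v).coeff g = starRingEnd ℂ (v.coeff g⁻¹) := by
  simp [gaStar, Finsupp.equivMapDomain_apply]

lemma gaStar_one : gaStar (1 : MonoidAlgebra ℂ G) = 1 := by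
  classical
  ext g
  simp [gaStar_coeff, MonoidAlgebra.one_def, Finsupp.single_apply, apply_ite (starRingEnd ℂ),
    eq_comm (a := (1 : G))]

lemma gaStar_add (v w : MonoidAlgebra ℂ G) : gaStar (v + w) = gaStar v + gaStar w := by
  ext g
  simp [gaStar_coeff]

lemma gaStar_smul (c : ℂ) (v : MonoidAlgebra ℂ G) :
    gaStar (c • v) = starRingEnd ℂ c • gaStar v := by
  ext g
  simp [gaStar_coeff]

end GroupAlgebraStar

def Matrix.HasZeroLineSums {m R : Type*} [Fintype m] [AddCommMonoid R] (X : Matrix m m R) :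
    Prop :=
  (∀ i, ∑ j, X i j = 0) ∧ ∀ j, ∑ i, X i j = 0

lemma Matrix.HasZeroLineSums.conjTranspose {m R : Type*} [Fintype m] [AddCommMonoid R]
    [StarAddMonoid R] {X : Matrix m m R} (hX : X.HasZeroLineSums) : Xᴴ.HasZeroLineSums :=
  ⟨fun i => by simp [← star_sum, hX.2 i], fun j => by simp [← star_sum, hX.1 j]⟩

section Counting

variable {G α : Type*} [Group G] [Fintype G] [MulAction G α] [Fintype α]

lemma card_filter_smul_eq_mul_card [DecidableEq α] [IsPretransitive G α] (a b : α) :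
    #{σ : G | σ • a = b} * Fintype.card α = Fintype.card G := by
  have fibre (c : α) : #{σ : G | σ • a = c} = #{σ : G | σ • a = b} := by
    obtain ⟨h, rfl⟩ := exists_smul_eq G b c
    refine card_nbij' (h⁻¹ * ·) (h * ·) ?_ ?_ ?_ ?_ <;> intro σ hσ <;> simp_all [mul_smul]
  calc #{σ : G | σ • a = b} * Fintype.card α = ∑ c : α, #{σ : G | σ • a = c} := by
        simp [fibre, mul_comm]
    _ = Fintype.card G := (card_eq_sum_card_fiberwise (by simp)).symm

lemma card_filter_smul_eq_and_smul_eq_mul [DecidableEq α] [IsMultiplyPretransitive G α 2]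
    {a b c d : α} (hac : a ≠ c) (hbd : b ≠ d) :
    #{σ : G | σ • a = b ∧ σ • c = d} * (Fintype.card α * (Fintype.card α - 1)) =
      Fintype.card G := by
  classical
  have key := card_filter_smul_eq_mul_card (G := G) (Function.Embedding.embFinTwo hac)
    (Function.Embedding.embFinTwo hbd)
  rw [Fintype.card_embedding_eq, Fintype.card_fin, Nat.descFactorial_succ,
    Nat.descFactorial_one, mul_comm (_ - 1)] at key
  convert key using 3
  ext σ
  simp [Function.Embedding.ext_iff, Fin.forall_fin_two, Function.Embedding.embFinTwo_apply_zero,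
    Function.Embedding.embFinTwo_apply_one]

lemma sum_smul_apply [IsPretransitive G α] (a : α) (f : α → ℂ) :
    ∑ σ : G, f (σ • a) = (Fintype.card G / Fintype.card α : ℂ) * ∑ k, f k := by
  classical
  have : Nonempty α := ⟨a⟩
  rw [← sum_fiberwise' univ (· • a) f, mul_sum]
  refine sum_congr rfl fun k _ => ?_
  rw [sum_const, nsmul_eq_mul]
  congr 1
  rw [eq_div_iff (by simp)]
  exact_mod_cast card_filter_smul_eq_mul_card (G := G) a k

lemma sum_smul_apply_mul_smul_apply [IsMultiplyPretransitive G α 2] {a c : α} (hac : a ≠ c)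
    (f g : α → ℂ) :
    ∑ σ : G, f (σ • a) * g (σ • c) =
      (Fintype.card G / (Fintype.card α * (Fintype.card α - 1)) : ℂ) *
        ((∑ k, f k) * (∑ k, g k) - ∑ k, f k * g k) := by
  classical
  set K : ℂ := Fintype.card G / (Fintype.card α * (Fintype.card α - 1))
  have count (k i : α) : (#{σ : G | σ • a = k ∧ σ • c = i} : ℂ) = if k = i then 0 else K := by
    split_ifs with hki
    · subst hki
      simpa [filter_eq_empty_iff] using
        fun (σ : G) ha hc => hac ((smul_left_cancel_iff σ).mp (ha.trans hc.symm))
    · have hα : 1 < Fintype.card α := Fintype.one_lt_card_iff.mpr ⟨a, c, hac⟩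
      have hcast : (Fintype.card α : ℂ) - 1 = (Fintype.card α - 1 : ℕ) := by
        rw [Nat.cast_sub hα.le, Nat.cast_one]
      rw [eq_div_iff, hcast]
      · exact_mod_cast card_filter_smul_eq_and_smul_eq_mul (G := G) hac hki
      · rw [hcast]
        exact_mod_cast (Nat.mul_pos (by omega) (by omega)).ne'
  calc ∑ σ : G, f (σ • a) * g (σ • c)
      = ∑ k, ∑ i, (#{σ : G | σ • a = k ∧ σ • c = i} : ℂ) * (f k * g i) := by
        rw [← Fintype.sum_prod_type' (fun k i => _ * (f k * g i)),
          ← sum_fiberwise' univ (fun σ : G => (σ • a, σ • c)) (fun p => f p.1 * g p.2)]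
        simp [Prod.ext_iff]
    _ = K * ((∑ k, f k) * (∑ k, g k) - ∑ k, f k * g k) := by
        have split (k i : α) : (if k = i then 0 else K) * (f k * g i) =
            K * (f k * g i) - if k = i then K * (f k * g k) else 0 := by
          split_ifs with h <;> simp [h]
        simp only [count, split, sum_sub_distrib, sum_ite_eq, mem_univ, if_true, ← mul_sum,
          sum_mul_sum, mul_sub]

end Counting

section PermRep

variable (G α : Type*) [Group G] [MulAction G α] [Fintype α] [DecidableEq α]

def permRep : G →* Matrix α α ℂ where
  toFun σ := Matrix.of fun i j => if σ • j = i then 1 else 0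
  map_one' := by ext i j; simp [Matrix.one_apply, eq_comm]
  map_mul' σ τ := by ext i j; simp [Matrix.mul_apply, mul_smul]

variable {G α}

lemma permRep_apply (σ : G) (i j : α) : permRep G α σ i j = if σ • j = i then 1 else 0 := rfl

lemma conjTranspose_permRep (σ : G) : (permRep G α σ)ᴴ = permRep G α σ⁻¹ := by
  ext i j
  simp [permRep_apply, apply_ite (star : ℂ → ℂ), eq_inv_smul_iff, eq_comm]

lemma permRep_mem_unitary (σ : G) : permRep G α σ ∈ unitary (Matrix α α ℂ) := by
  simp [Unitary.mem_iff, star_eq_conjTranspose, conjTranspose_permRep, ← map_mul]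

lemma hasZeroLineSums_permRep_sub_one (σ : G) : (permRep G α σ - 1).HasZeroLineSums := by
  constructor
  · intro i
    simp [permRep_apply, Matrix.one_apply, sum_sub_distrib, smul_eq_iff_eq_inv_smul]
  · intro j
    simp [permRep_apply, Matrix.one_apply, sum_sub_distrib]

end PermRep

lemma card_div_card_sub_one_ne_zero (G α : Type*) [Fintype G] [Nonempty G] [Fintype α]
    [Nontrivial α] : (Fintype.card G / (Fintype.card α - 1) : ℂ) ≠ 0 :=
  div_ne_zero (by simp) (sub_ne_zero.mpr (by exact_mod_cast Fintype.one_lt_card.ne'))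

section Lifting

variable (G α : Type*) [Group G] [Fintype G] [MulAction G α] [Fintype α]

noncomputable def permRepTranspose : Matrix α α ℂ →ₗ[ℂ] MonoidAlgebra ℂ G where
  toFun X := .ofCoeff (Finsupp.equivFunOnFinite.symm fun σ => ∑ l, X (σ • l) l)
  map_add' X Y := by ext σ; simp [sum_add_distrib]
  map_smul' c X := by ext σ; simp [mul_sum]

variable {G α}

lemma permRepTranspose_coeff (X : Matrix α α ℂ) (σ : G) :
    (permRepTranspose G α X).coeff σ = ∑ l, X (σ • l) l := rfl

/-- The constant is `|G| / |α| + |G| / (|α| (|α| - 1))`: the number of `σ` sending a given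
point to a given point, plus the number sending a given pair of distinct points to another. -/
lemma sum_permRepTranspose_coeff_mul_coeff [IsMultiplyPretransitive G α 2] [Nontrivial α]
    {X : Matrix α α ℂ} (hX : X.HasZeroLineSums) (Z : Matrix α α ℂ) :
    ∑ σ : G, (permRepTranspose G α X).coeff σ * (permRepTranspose G α Z).coeff σ =
      (Fintype.card G / (Fintype.card α - 1) : ℂ) * ∑ k, ∑ l, X k l * Z k l := by
  classical
  have : IsPretransitive G α := isPretransitive_of_is_two_pretransitive
  set M : ℂ := Fintype.card G / Fintype.card α
  set K : ℂ := Fintype.card G / (Fintype.card α * (Fintype.card α - 1))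
  have pair (l m : α) : ∑ σ : G, X (σ • l) l * Z (σ • m) m =
      (if l = m then (M + K) * ∑ k, X k l * Z k l else 0) - K * ∑ k, X k l * Z k m := by
    by_cases hlm : l = m
    · subst hlm
      rw [if_pos rfl, sum_smul_apply l (fun k => X k l * Z k l)]
      ring
    · rw [if_neg hlm, sum_smul_apply_mul_smul_apply hlm (X · l) (Z · m), hX.2 l]
      ring
  have hMK : M + K = Fintype.card G / (Fintype.card α - 1) := by
    have : (Fintype.card α : ℂ) - 1 ≠ 0 :=
      sub_ne_zero.mpr (by exact_mod_cast Fintype.one_lt_card.ne')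
    simp only [M, K]
    field_simp
    ring
  have rows : ∑ l, ∑ m, ∑ k, X k l * Z k m = 0 :=
    calc ∑ l, ∑ m, ∑ k, X k l * Z k m = ∑ k, (∑ l, X k l) * ∑ m, Z k m := by
          simp only [sum_mul_sum]
          rw [sum_congr rfl fun l _ => sum_comm]
          exact sum_comm
      _ = 0 := by simp [hX.1]
  calc ∑ σ : G, (permRepTranspose G α X).coeff σ * (permRepTranspose G α Z).coeff σ
      = ∑ l, ∑ m, ∑ σ : G, X (σ • l) l * Z (σ • m) m := by
        simp only [permRepTranspose_coeff, sum_mul_sum]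
        rw [sum_comm]
        exact sum_congr rfl fun l _ => sum_comm
    _ = (M + K) * ∑ l, ∑ k, X k l * Z k l - K * ∑ l, ∑ m, ∑ k, X k l * Z k m := by
        simp only [pair, sum_sub_distrib, sum_ite_eq, mem_univ, if_true, ← mul_sum]
    _ = _ := by rw [rows, hMK, sum_comm]; ring

lemma permRepTranspose_mul [IsMultiplyPretransitive G α 2] [Nontrivial α]
    {X : Matrix α α ℂ} (hX : X.HasZeroLineSums) (Y : Matrix α α ℂ) :
    permRepTranspose G α X * permRepTranspose G α Y =
      (Fintype.card G / (Fintype.card α - 1) : ℂ) • permRepTranspose G α (X * Y) := by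
  ext g
  have shift (σ : G) : (permRepTranspose G α Y).coeff (σ⁻¹ * g) =
      (permRepTranspose G α (of fun a b => Y b (g⁻¹ • a))).coeff σ :=
    Fintype.sum_equiv (toPerm (σ⁻¹ * g)) _ _ fun l => by simp [mul_smul]
  rw [MonoidAlgebra.coeff_mul_apply_left, Finsupp.sum_fintype _ _ (by simp)]
  simp only [shift]
  rw [sum_permRepTranspose_coeff_mul_coeff hX, MonoidAlgebra.coeff_smul_apply, smul_eq_mul,
    permRepTranspose_coeff]
  congr 1
  exact Fintype.sum_equiv (toPerm g⁻¹) _ _ fun k => by simp [mul_apply]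

lemma gaStar_permRepTranspose (X : Matrix α α ℂ) :
    gaStar (permRepTranspose G α X) = permRepTranspose G α Xᴴ := by
  ext g
  simp only [gaStar_coeff, permRepTranspose_coeff, map_sum, conjTranspose_apply]
  exact Fintype.sum_equiv (toPerm g⁻¹) _ _ fun l => by simp

variable [DecidableEq α]

lemma lift_permRepTranspose [IsMultiplyPretransitive G α 2] [Nontrivial α]
    {X : Matrix α α ℂ} (hX : X.HasZeroLineSums) :
    MonoidAlgebra.lift ℂ (Matrix α α ℂ) G (permRep G α) (permRepTranspose G α X) =
      (Fintype.card G / (Fintype.card α - 1) : ℂ) • X := by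
  ext i j
  have entry (σ : G) : permRep G α σ i j = (permRepTranspose G α (single i j 1)).coeff σ := by
    rw [permRepTranspose_coeff, sum_eq_single j (fun m _ hm => by simp [Ne.symm hm]) (by simp)]
    simp [permRep_apply, single_apply, eq_comm]
  rw [MonoidAlgebra.lift_apply, Finsupp.sum_fintype _ _ (by simp)]
  simp only [Matrix.sum_apply, Matrix.smul_apply, smul_eq_mul, entry,
    sum_permRepTranspose_coeff_mul_coeff hX]
  simp [single_apply, ite_and]

variable (G α) in
noncomputable def permRepSection (U : Matrix α α ℂ) : MonoidAlgebra ℂ G :=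
  1 + (Fintype.card G / (Fintype.card α - 1) : ℂ)⁻¹ • permRepTranspose G α (U - 1)

lemma permRepSection_one : permRepSection G α 1 = 1 := by
  simp [permRepSection]

lemma gaStar_permRepSection (U : Matrix α α ℂ) :
    gaStar (permRepSection G α U) = permRepSection G α Uᴴ := by
  rw [permRepSection, permRepSection, gaStar_add, gaStar_one, gaStar_smul,
    gaStar_permRepTranspose, conjTranspose_sub, conjTranspose_one]
  simp

lemma lift_permRepSection [IsMultiplyPretransitive G α 2] [Nontrivial α] {U : Matrix α α ℂ}
    (hU : (U - 1).HasZeroLineSums) :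
    MonoidAlgebra.lift ℂ (Matrix α α ℂ) G (permRep G α) (permRepSection G α U) = U := by
  rw [permRepSection, map_add, map_one, map_smul, lift_permRepTranspose hU, smul_smul,
    inv_mul_cancel₀ (card_div_card_sub_one_ne_zero G α), one_smul, add_sub_cancel]

lemma permRepSection_mul [IsMultiplyPretransitive G α 2] [Nontrivial α] {U : Matrix α α ℂ}
    (hU : (U - 1).HasZeroLineSums) (V : Matrix α α ℂ) :
    permRepSection G α (U * V) = permRepSection G α U * permRepSection G α V := by
  have hUV : U * V - 1 = (U - 1) + (V - 1) + (U - 1) * (V - 1) := by noncomm_ring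
  have hprod := permRepTranspose_mul (G := G) hU (V - 1)
  rw [← inv_smul_eq_iff₀ (card_div_card_sub_one_ne_zero G α)] at hprod
  simp only [permRepSection, hUV, map_add, ← hprod, mul_add, add_mul, one_mul, mul_one,
    smul_mul_assoc, mul_smul_comm, smul_smul, smul_add]
  module

lemma permRepSection_mem_unitary [IsMultiplyPretransitive G α 2] [Nontrivial α]
    {U : Matrix α α ℂ} (hU : U ∈ unitary (Matrix α α ℂ)) (hU1 : (U - 1).HasZeroLineSums) :
    gaStar (permRepSection G α U) * permRepSection G α U = 1 ∧
      permRepSection G α U * gaStar (permRepSection G α U) = 1 := by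
  have hU1' : (Uᴴ - 1).HasZeroLineSums := by simpa using hU1.conjTranspose
  rw [gaStar_permRepSection, ← permRepSection_mul hU1', ← permRepSection_mul hU1,
    ← star_eq_conjTranspose, Unitary.star_mul_self_of_mem hU, Unitary.mul_star_self_of_mem hU,
    permRepSection_one]
  exact ⟨rfl, rfl⟩

end Lifting

lemma alternatingGroup.isMultiplyPretransitive_two {α : Type*} [Fintype α] [DecidableEq α]
    (hα : 4 ≤ Nat.card α) : IsMultiplyPretransitive (alternatingGroup α) α 2 :=
  have := alternatingGroup.isMultiplyPretransitive α
  isMultiplyPretransitive_of_le (n := Nat.card α - 2) (by omega) (by omega)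

lemma tildePi_eq_lift (n : ℕ) (v : MonoidAlgebra ℂ (alternatingGroup (Fin n))) :
    tildePi n v = MonoidAlgebra.lift ℂ _ _ (permRep (alternatingGroup (Fin n)) (Fin n)) v := by
  rw [MonoidAlgebra.lift_apply]
  rfl

theorem exists_unitary_lifting_odd_perm_general (n : ℕ) (hn : 4 ≤ n)
    (τ : Equiv.Perm (Fin n)) :
    ∃ v : MonoidAlgebra ℂ (alternatingGroup (Fin n)),
      gaStar v * v = 1 ∧ v * gaStar v = 1 ∧ tildePi n v = permMat n τ := by
  have : IsMultiplyPretransitive (alternatingGroup (Fin n)) (Fin n) 2 :=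
    alternatingGroup.isMultiplyPretransitive_two (by simpa using hn)
  have : Nontrivial (Fin n) := Fin.nontrivial_iff_two_le.mpr (by omega)
  have hτ : permMat n τ = permRep (Equiv.Perm (Fin n)) (Fin n) τ := rfl
  refine ⟨permRepSection _ _ (permMat n τ), ?_⟩
  rw [tildePi_eq_lift, hτ]
  obtain ⟨h1, h2⟩ := permRepSection_mem_unitary (G := alternatingGroup (Fin n)) (α := Fin n)
    (permRep_mem_unitary τ) (hasZeroLineSums_permRep_sub_one τ)
  exact ⟨h1, h2, lift_permRepSection (hasZeroLineSums_permRep_sub_one τ)⟩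

/-- For `n ≥ 4` and an odd permutation `τ ∈ S_n`, there is a unitary element `v` of the
group *-algebra `ℂ[A_n]` whose integrated representation satisfies `π̃(v) = π(τ)`. -/
theorem exists_unitary_lifting_odd_perm (n : ℕ) (hn : 4 ≤ n)
    (τ : Equiv.Perm (Fin n)) (hτ : τ ∉ alternatingGroup (Fin n)) :
    ∃ v : MonoidAlgebra ℂ (alternatingGroup (Fin n)),
      gaStar v * v = 1 ∧ v * gaStar v = 1 ∧ tildePi n v = permMat n τ :=
  exists_unitary_lifting_odd_perm_general n hn τ
end
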